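/- arXiv:1110.4203 — 2 statements merged into one kernel-verified Lean document; each statement's English description precedes it below -/
import Mathlib

section
/- Let (Ω, ℱ) be a measurable space, let μ and ν be probability measures on (Ω, ℱ), and let (𝒜_n)_{n∈ℕ} be a decreasing sequence of sub-σ-algebras of ℱ with tail σ-algebra 𝒜 := ⋂_{n∈ℕ} 𝒜_n. Suppose that for every n there exists a set A_n ∈ 𝒜_n with μ(A_n) = 0 and ν(A_n) = 1. Then the set A_* := ⋃_{m∈ℕ} ⋂_{n≥m} A_n belongs to 𝒜 and satisfies μ(A_*) = 0 and ν(A_*) = 1; in particular, the restrictions of μ and ν to the σ-algebra 𝒜 are mutually singular. -/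
open MeasureTheory

/-- **Singularity detectable on a decreasing family of sub-σ-algebras.**
If `(𝒜 n)` is a decreasing sequence of sub-σ-algebras of `F` with tail σ-algebra
`⨅ n, 𝒜 n`, and for every `n` there is `A n ∈ 𝒜 n` with `μ (A n) = 0` and
`ν (A n) = 1`, then `A_* = ⋃ m, ⋂ n ≥ m, A n` is tail measurable, is `μ`-null and
`ν`-full, and the restrictions (trims) of `μ` and `ν` to the tail σ-algebra are
mutually singular. -/
theorem tail_singularity {Ω : Type*} [F : MeasurableSpace Ω]
    (μ ν : Measure Ω) [IsProbabilityMeasure μ] [IsProbabilityMeasure ν]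
    (𝒜 : ℕ → MeasurableSpace Ω) (hle : ∀ n, 𝒜 n ≤ F)
    (hdec : ∀ n, 𝒜 (n + 1) ≤ 𝒜 n)
    (A : ℕ → Set Ω) (hA : ∀ n, MeasurableSet[𝒜 n] (A n))
    (hμA : ∀ n, μ (A n) = 0) (hνA : ∀ n, ν (A n) = 1) :
    MeasurableSet[⨅ n, 𝒜 n] (⋃ m, ⋂ n ∈ Set.Ici m, A n) ∧
    μ (⋃ m, ⋂ n ∈ Set.Ici m, A n) = 0 ∧
    ν (⋃ m, ⋂ n ∈ Set.Ici m, A n) = 1 ∧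
    (μ.trim (le_trans (iInf_le 𝒜 0) (hle 0))).MutuallySingular
      (ν.trim (le_trans (iInf_le 𝒜 0) (hle 0))) := by
  have hanti : Antitone 𝒜 := antitone_nat_of_succ_le hdec
  set B : ℕ → Set Ω := fun m => ⋂ n ∈ Set.Ici m, A n with hB
  have hBmono : Monotone B := by
    intro a b hab
    exact Set.biInter_subset_biInter_left (fun n hn => le_trans hab hn)
  have hBsub : ∀ m, B m ⊆ A m := fun m => Set.biInter_subset_of_mem (le_refl m)
  -- measurability in each 𝒜 k
  have hmeas : MeasurableSet[⨅ n, 𝒜 n] (⋃ m, B m) := by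
    rw [MeasurableSpace.measurableSet_iInf]
    intro k
    have hEq : (⋃ m, B m) = ⋃ m, B (m + k) := by
      apply Set.Subset.antisymm
      · exact Set.iUnion_mono' fun m => ⟨m, hBmono (Nat.le_add_right m k)⟩
      · exact Set.iUnion_mono' fun m => ⟨m + k, le_refl _⟩
    rw [hEq]
    refine MeasurableSet.iUnion fun m => MeasurableSet.biInter (Set.to_countable _) ?_
    intro n hn
    exact hanti (le_trans (Nat.le_add_left k m) hn) _ (hA n)
  have hμ : μ (⋃ m, B m) = 0 :=
    measure_iUnion_null fun m => measure_mono_null (hBsub m) (hμA m)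
  have hν : ν (⋃ m, B m) = 1 := by
    have hν0 : ν (B 0) = 1 := by
      have hc : ν (B 0)ᶜ = 0 := by
        have : (B 0)ᶜ = ⋃ n ∈ Set.Ici 0, (A n)ᶜ := by
          simp [hB, Set.compl_iInter]
        rw [this]
        refine measure_biUnion_null_iff (Set.to_countable _) |>.2 fun n _ => ?_
        have hmn : MeasurableSet (A n) := hle n _ (hA n)
        rw [measure_compl hmn (measure_ne_top ν _), hνA n, measure_univ, tsub_self]
      have hm : MeasurableSet (B 0) := by
        refine MeasurableSet.biInter (Set.to_countable _) fun n _ => hle n _ (hA n)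
      exact (prob_compl_eq_zero_iff hm).mp hc
    have hge : (1 : ENNReal) ≤ ν (⋃ m, B m) := hν0 ▸ measure_mono (Set.subset_iUnion B 0)
    exact le_antisymm prob_le_one hge
  refine ⟨hmeas, hμ, hν, ?_⟩
  refine ⟨⋃ m, B m, hmeas, ?_, ?_⟩
  · rw [trim_measurableSet_eq _ hmeas, hμ]
  · rw [trim_measurableSet_eq _ hmeas.compl]
    have hm : MeasurableSet (⋃ m, B m) := le_trans (iInf_le 𝒜 0) (hle 0) _ hmeas
    rw [measure_compl hm (measure_ne_top ν _), hν, measure_univ, tsub_self]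
end

section
/- Let K be a compact metric space and, for continuous functions f, g : [0,1] → K, define dist(f, g) := inf_φ sup_{t∈[0,1]} d_K(f(t), g(φ(t))), where the infimum is over all increasing bijections φ : [0,1] → [0,1]. Then the quotient of C([0,1], K) by the equivalence relation f ∼ g ⟺ dist(f, g) = 0, equipped with the metric induced by dist, is a complete separable metric space. -/
open unitInterval TopologicalSpace

/-- The reparametrization distance between two curves `f g : [0,1] → K`:
`dist(f,g) = inf_φ sup_t d(f t, g (φ t))`, the infimum running over all
increasing bijections `φ : [0,1] → [0,1]`. -/
noncomputable def curveDist {K : Type*} [MetricSpace K]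
    (f g : unitInterval → K) : ℝ :=
  ⨅ φ : {φ : unitInterval → unitInterval // StrictMono φ ∧ Function.Bijective φ},
    ⨆ t : unitInterval, dist (f t) (g (φ.1 t))

/-!
Up to a change of variable `e : [0,1] ≃o [0,1]`, `curveDist f g` is the infimum of the uniform
distances `dist f (g ∘ e)`, and `g ∘ e` lies in the class of `g`. Hence the projection
`C([0,1], K) → C([0,1], K)/∼` is 1-Lipschitz, and every class at distance `< r` from the class of
`f` has a representative at uniform distance `< r` from `f`. The first property transfers
separability from `C([0,1], K)`; the second lets a fast Cauchy sequence of classes be lifted, one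
representative at a time, to a uniformly Cauchy sequence of curves, whose uniform limit then
represents the limit class.
-/

open Function

theorem ContinuousMap.dist_comp_of_surjective {α α' β : Type*} [TopologicalSpace α]
    [CompactSpace α] [TopologicalSpace α'] [CompactSpace α'] [PseudoMetricSpace β]
    (f g : C(α', β)) {e : C(α, α')} (he : Surjective e) :
    dist (f.comp e) (g.comp e) = dist f g := by
  simp only [ContinuousMap.dist_eq_iSup, ContinuousMap.comp_apply]
  exact he.iSup_comp fun x => dist (f x) (g x)

theorem Metric.completeSpace_of_exists_lift {X Y : Type*} [PseudoMetricSpace X] [CompleteSpace X]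
    [PseudoMetricSpace Y] {q : X → Y} (hq : Continuous q) (hsurj : Surjective q)
    (hlift : ∀ x y r, dist (q x) y < r → ∃ x', q x' = y ∧ dist x x' < r) :
    CompleteSpace Y := by
  refine Metric.complete_of_convergent_controlled_sequences (fun n => (1 / 2 : ℝ) ^ n)
    (fun n => by positivity) fun u hu => ?_
  choose next hnext_q hnext_dist using fun n x =>
    hlift x (u (n + 1)) (dist (q x) (u (n + 1)) + (1 / 2 : ℝ) ^ n) (by simp)
  let x : ℕ → X := fun n => Nat.rec (surjInv hsurj (u 0)) next n
  have hqx : ∀ n, q (x n) = u n := by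
    rintro (_ | n)
    · exact surjInv_eq hsurj (u 0)
    · exact hnext_q n _
  have hstep : ∀ n, dist (x n) (x (n + 1)) ≤ 2 * (1 / 2 : ℝ) ^ n := fun n => by
    have hlifted : dist (x n) (x (n + 1)) < dist (u n) (u (n + 1)) + (1 / 2 : ℝ) ^ n :=
      hqx n ▸ hnext_dist n (x n)
    linarith [hu n n (n + 1) le_rfl n.le_succ]
  obtain ⟨a, ha⟩ := cauchySeq_tendsto_of_complete
    (cauchySeq_of_le_geometric (1 / 2) 2 (by norm_num) hstep)
  exact ⟨q a, funext hqx ▸ (hq.tendsto a).comp ha⟩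

section

variable {K : Type*} [MetricSpace K]

theorem curveDist_eq_iInf_dist (f g : C(I, K)) :
    curveDist ⇑f ⇑g = ⨅ e : I ≃o I, dist f (g.comp e) := by
  let toReparam : (I ≃o I) → {φ : I → I // StrictMono φ ∧ Bijective φ} :=
    fun e => ⟨e, e.strictMono, e.bijective⟩
  have hsurj : Surjective toReparam := fun φ =>
    ⟨φ.2.1.orderIsoOfSurjective φ.1 φ.2.2.2, rfl⟩
  rw [curveDist, ← hsurj.iInf_comp]
  simp only [ContinuousMap.dist_eq_iSup, ContinuousMap.comp_apply]
  rfl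

theorem curveDist_le_dist_comp (f g : C(I, K)) (e : I ≃o I) :
    curveDist ⇑f ⇑g ≤ dist f (g.comp e) := by
  rw [curveDist_eq_iInf_dist]
  exact ciInf_le ⟨0, by rintro _ ⟨e, rfl⟩; exact dist_nonneg⟩ e

theorem curveDist_le_dist (f g : C(I, K)) : curveDist ⇑f ⇑g ≤ dist f g :=
  curveDist_le_dist_comp f g (OrderIso.refl I)

theorem exists_dist_comp_lt_of_curveDist_lt {f g : C(I, K)} {r : ℝ}
    (h : curveDist ⇑f ⇑g < r) : ∃ e : I ≃o I, dist f (g.comp e) < r := by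
  rw [curveDist_eq_iInf_dist] at h
  exact exists_lt_of_ciInf_lt h

theorem curveDist_nonneg (f g : C(I, K)) : 0 ≤ curveDist ⇑f ⇑g := by
  rw [curveDist_eq_iInf_dist]
  exact le_ciInf fun _ => dist_nonneg

theorem curveDist_self (f : C(I, K)) : curveDist ⇑f ⇑f = 0 :=
  le_antisymm ((curveDist_le_dist f f).trans_eq (dist_self f)) (curveDist_nonneg f f)

theorem curveDist_comp_orderIso (g : C(I, K)) (e : I ≃o I) :
    curveDist ⇑(g.comp e) ⇑g = 0 :=
  le_antisymm ((curveDist_le_dist_comp _ g e).trans_eq (dist_self _)) (curveDist_nonneg _ _)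

theorem curveDist_comm_le (f g : C(I, K)) : curveDist ⇑f ⇑g ≤ curveDist ⇑g ⇑f := by
  rw [curveDist_eq_iInf_dist g f]
  refine le_ciInf fun e => (curveDist_le_dist_comp f g e.symm).trans_eq ?_
  calc dist f (g.comp e.symm)
      = dist (f.comp (e : C(I, I))) ((g.comp e.symm).comp (e : C(I, I))) :=
        (ContinuousMap.dist_comp_of_surjective _ _ e.surjective).symm
    _ = dist g (f.comp e) := by
        rw [dist_comm]; congr 1; ext t; simp

theorem curveDist_comm (f g : C(I, K)) : curveDist ⇑f ⇑g = curveDist ⇑g ⇑f :=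
  le_antisymm (curveDist_comm_le f g) (curveDist_comm_le g f)

theorem curveDist_triangle (f g h : C(I, K)) :
    curveDist ⇑f ⇑h ≤ curveDist ⇑f ⇑g + curveDist ⇑g ⇑h := by
  refine le_of_forall_pos_lt_add fun ε hε => ?_
  obtain ⟨e₁, he₁⟩ := exists_dist_comp_lt_of_curveDist_lt
    (lt_add_of_pos_right (curveDist ⇑f ⇑g) (half_pos hε))
  obtain ⟨e₂, he₂⟩ := exists_dist_comp_lt_of_curveDist_lt
    (lt_add_of_pos_right (curveDist ⇑g ⇑h) (half_pos hε))
  have hcomp :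
      dist (g.comp (e₁ : C(I, I))) ((h.comp e₂).comp (e₁ : C(I, I))) = dist g (h.comp e₂) :=
    ContinuousMap.dist_comp_of_surjective _ _ e₁.surjective
  calc curveDist ⇑f ⇑h ≤ dist f ((h.comp e₂).comp (e₁ : C(I, I))) :=
        curveDist_le_dist_comp f h (e₁.trans e₂)
    _ ≤ dist f (g.comp e₁) + dist g (h.comp e₂) := hcomp ▸ dist_triangle _ _ _
    _ < curveDist ⇑f ⇑g + curveDist ⇑g ⇑h + ε := by linarith

theorem curveDist_congr_right {f g g' : C(I, K)} (h : curveDist ⇑g ⇑g' = 0) :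
    curveDist ⇑f ⇑g = curveDist ⇑f ⇑g' := by
  have h₁ := curveDist_triangle f g g'
  have h₂ := curveDist_triangle f g' g
  rw [curveDist_comm g' g] at h₂
  linarith

variable (K) in
/-- The quotient of `C([0,1], K)` by `curveDist = 0`; a `def`, so that its metric instance does
not clash with the quotient topology on `Quot`. -/
def CurveSpace : Type _ := Quot fun f g : C(I, K) => curveDist ⇑f ⇑g = 0

namespace CurveSpace

def mk (f : C(I, K)) : CurveSpace K := Quot.mk _ f

theorem mk_surjective : Surjective (mk : C(I, K) → CurveSpace K) := Quot.mk_surjective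

theorem mk_comp_orderIso (g : C(I, K)) (e : I ≃o I) : mk (g.comp e) = mk g :=
  Quot.sound (curveDist_comp_orderIso g e)

noncomputable instance : MetricSpace (CurveSpace K) where
  dist := Quot.lift₂ (fun f g => curveDist ⇑f ⇑g)
    (fun _ _ _ => curveDist_congr_right)
    (fun _ _ g h => by simpa only [curveDist_comm _ g] using curveDist_congr_right h)
  dist_self := Quot.ind curveDist_self
  dist_comm x y := Quot.induction_on₂ x y curveDist_comm
  dist_triangle x y z := Quot.induction_on₃ x y z curveDist_triangle
  eq_of_dist_eq_zero {x y} := Quot.induction_on₂ x y fun _ _ h => Quot.sound h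

theorem dist_mk (f g : C(I, K)) : dist (mk f) (mk g) = curveDist ⇑f ⇑g := rfl

theorem lipschitzWith_mk : LipschitzWith 1 (mk : C(I, K) → CurveSpace K) :=
  LipschitzWith.of_dist_le_mul fun f g => by
    simpa only [NNReal.coe_one, one_mul, dist_mk] using curveDist_le_dist f g

theorem exists_mk_eq_dist_lt (f : C(I, K)) (y : CurveSpace K) (r : ℝ) (h : dist (mk f) y < r) :
    ∃ g, mk g = y ∧ dist f g < r := by
  induction y using Quot.ind with
  | mk g =>
    obtain ⟨e, he⟩ := exists_dist_comp_lt_of_curveDist_lt h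
    exact ⟨g.comp e, mk_comp_orderIso g e, he⟩

instance [CompleteSpace K] : CompleteSpace (CurveSpace K) :=
  Metric.completeSpace_of_exists_lift lipschitzWith_mk.continuous mk_surjective
    exists_mk_eq_dist_lt

instance [SeparableSpace K] : SeparableSpace (CurveSpace K) :=
  mk_surjective.denseRange.separableSpace lipschitzWith_mk.continuous

end CurveSpace

end

/-- **The space of curves is a complete separable metric space.**
For a compact metric space `K`, the quotient of `C([0,1], K)` by the relation
`f ∼ g ⟺ curveDist f g = 0` carries a metric inducing `curveDist`, and with it
the quotient is a complete and separable metric space. -/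
theorem curveSpace_completeSpace_separableSpace
    {K : Type*} [MetricSpace K] [CompactSpace K] :
    ∃ m : MetricSpace (Quot fun f g : C(unitInterval, K) => curveDist ⇑f ⇑g = 0),
      (∀ f g : C(unitInterval, K),
        @dist _ m.toPseudoMetricSpace.toDist (Quot.mk _ f) (Quot.mk _ g)
          = curveDist ⇑f ⇑g) ∧
      @CompleteSpace _ m.toPseudoMetricSpace.toUniformSpace ∧
      @SeparableSpace _ m.toPseudoMetricSpace.toUniformSpace.toTopologicalSpace :=
  ⟨(inferInstance : MetricSpace (CurveSpace K)), CurveSpace.dist_mk,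
    (inferInstance : CompleteSpace (CurveSpace K)),
    (inferInstance : SeparableSpace (CurveSpace K))⟩
end
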